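/- arXiv:1403.1750 — 3 statements merged into one kernel-verified Lean document; each statement's English description precedes it below -/
import Mathlib

section
/- A connected framed 4-valent graph admits at most two source-sink structures. -/
/-! Framed 4-valent graphs, modeled via darts (half-edges). -/

structure FramedGraph : Type 1 where
  /-- darts (half-edges) -/
  D : Type
  /-- vertices -/
  V : Type
  /-- the fixed-point-free involution pairing the two darts of each edge -/
  edge : D → D
  /-- the framing: at each vertex, a fixed-point-free involution pairing each
      half-edge with its opposite half-edge -/
  opp : D → D
  /-- the vertex a dart is attached to -/
  vert : D → V
  edge_invol : ∀ d, edge (edge d) = d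
  edge_ne : ∀ d, edge d ≠ d
  opp_invol : ∀ d, opp (opp d) = d
  opp_ne : ∀ d, opp d ≠ d
  opp_vert : ∀ d, vert (opp d) = vert d
  /-- every vertex has exactly four half-edges -/
  degree_four : ∀ v, Nat.card {d : D // vert d = v} = 4

namespace FramedGraph

/-- Two darts are adjacent in the incidence structure: they span an edge or
share a vertex.  Used to define connectivity. -/
def Adj (G : FramedGraph) (d d' : G.D) : Prop :=
  G.edge d = d' ∨ G.vert d = G.vert d'

def Connected (G : FramedGraph) : Prop :=
  ∀ d d' : G.D, Relation.ReflTransGen G.Adj d d'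

/-- A source-sink structure: an orientation of the edges (`S` is the set of
"incoming" darts, one per edge) such that at every vertex exactly two darts are
incoming and they are opposite to each other. -/
def IsSourceSink (G : FramedGraph) (S : Set G.D) : Prop :=
  (∀ d, d ∈ S ↔ G.edge d ∉ S) ∧
  (∀ v : G.V, ∃ d, G.vert d = v ∧ d ∈ S ∧ G.opp d ∈ S ∧
    ∀ d', G.vert d' = v → d' ∈ S → d' = d ∨ d' = G.opp d)

/-- Following an edge of the smoothed graph: traverse an edge of `G`, and while
arriving at the smoothed vertex `X`, jump along the chosen adjacent pairing `p`
and continue. (At most two passages through `X` are possible.) -/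
noncomputable def smoothEdge (G : FramedGraph) (X : G.V) (p : G.D → G.D) (d : G.D) : G.D := by
  classical
  exact
    if G.vert (G.edge d) ≠ X then G.edge d
    else if G.vert (G.edge (p (G.edge d))) ≠ X then G.edge (p (G.edge d))
    else G.edge (p (G.edge (p (G.edge d))))

/-- `G'` is obtained from `G` by smoothing at the vertex `X`: the four
half-edges at `X` are reconnected into two pairs of adjacent (non-opposite)
half-edges according to an involution `p`, the vertex `X` disappears, and
everything else is untouched. -/
def IsSmoothingAt (G G' : FramedGraph) (X : G.V) : Prop :=
  ∃ (ι : G'.D → G.D) (p : G.D → G.D),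
    Function.Injective ι ∧
    (∀ d, G.vert (ι d) ≠ X) ∧
    (∀ e : G.D, G.vert e ≠ X → ∃ d, ι d = e) ∧
    (∀ d d', G'.vert d = G'.vert d' ↔ G.vert (ι d) = G.vert (ι d')) ∧
    (∀ d, ι (G'.opp d) = G.opp (ι d)) ∧
    (∀ e, G.vert e = X → G.vert (p e) = X ∧ p (p e) = e ∧ p e ≠ e ∧ p e ≠ G.opp e) ∧
    (∀ d, ι (G'.edge d) = G.smoothEdge X p (ι d))

/-- A rotating circuit: a closed walk `d 0, d 1, …` (indices mod `n`)
traversing every edge exactly once, which at every vertex continues along a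
half-edge *adjacent* (neither equal nor opposite) to the arriving half-edge. -/
structure RotatingCircuit (G : FramedGraph) : Type where
  n : ℕ
  pos : 0 < n
  d : ZMod n → G.D
  step_vert : ∀ i, G.vert (d (i + 1)) = G.vert (G.edge (d i))
  step_ne : ∀ i, d (i + 1) ≠ G.edge (d i)
  step_adj : ∀ i, d (i + 1) ≠ G.opp (G.edge (d i))
  once : ∀ e : G.D, ∃! i, d i = e ∨ d i = G.edge e

/-- The circuit is good at `X`: the two passages through `X` arrive along a
pair of opposite half-edges. -/
def GoodAt (G : FramedGraph) (c : RotatingCircuit G) (X : G.V) : Prop :=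
  ∀ i j : ZMod c.n, G.vert (G.edge (c.d i)) = X → G.vert (G.edge (c.d j)) = X →
    i ≠ j → G.edge (c.d j) = G.opp (G.edge (c.d i))

/-- Isomorphism of framed 4-graphs. -/
def Iso (G G' : FramedGraph) : Prop :=
  ∃ (φ : G.D ≃ G'.D) (ψ : G.V ≃ G'.V),
    (∀ d, G'.edge (φ d) = φ (G.edge d)) ∧
    (∀ d, G'.opp (φ d) = φ (G.opp d)) ∧
    (∀ d, G'.vert (φ d) = ψ (G.vert d))

/-- `G'` is obtained from `G` by deleting some connected components. -/
def IsComponentRestriction (G G' : FramedGraph) : Prop :=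
  ∃ ι : G'.D → G.D, Function.Injective ι ∧
    (∀ d, ι (G'.edge d) = G.edge (ι d)) ∧
    (∀ d, ι (G'.opp d) = G.opp (ι d)) ∧
    (∀ d d', G'.vert d = G'.vert d' ↔ G.vert (ι d) = G.vert (ι d')) ∧
    (∀ x y, (∃ d, ι d = x) → G.Adj x y → ∃ d', ι d' = y)

/-- `G'` is a minor of `G`: obtained (up to isomorphism) by a sequence of
smoothings at vertices and deletions of connected components. -/
def MinorOf (G' G : FramedGraph) : Prop :=
  ∃ G'' : FramedGraph,
    Relation.ReflTransGen
      (fun A B => (∃ X : A.V, A.IsSmoothingAt B X) ∨ A.IsComponentRestriction B) G G'' ∧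
    G''.Iso G'

/-- Degree of a vertex in the subgraph with dart set `S`. -/
noncomputable def sdeg (G : FramedGraph) (S : Set G.D) (v : G.V) : ℕ :=
  Nat.card {d : G.D // G.vert d = v ∧ d ∈ S}

/-- `v` is a full (degree-4) vertex of the subgraph `S`. -/
def Full (G : FramedGraph) (S : Set G.D) (v : G.V) : Prop :=
  ∀ d, G.vert d = v → d ∈ S

/-- One step of suppressing a valency-2 vertex: from dart `a` cross its edge,
arrive at a vertex of valency 2 in `S`, and continue along the other dart of
`S` there. -/
def PassThrough (G : FramedGraph) (S : Set G.D) (a b : G.D) : Prop :=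
  G.edge a ∈ S ∧ sdeg G S (G.vert (G.edge a)) = 2 ∧ b ∈ S ∧ b ≠ G.edge a ∧
    G.vert b = G.vert (G.edge a)

/-- `G'` is an s-minor of `G`: pass to a subgraph `S` all of whose vertices
have even valency, suppress all valency-2 vertices (and vertexless circles),
and delete connected components (subsumed in the choice of `S`). -/
def SMinorOf (G' G : FramedGraph) : Prop :=
  ∃ (S : Set G.D) (ι : G'.D → G.D),
    (∀ d ∈ S, G.edge d ∈ S) ∧
    (∀ v, Even (sdeg G S v)) ∧
    Function.Injective ι ∧
    (∀ d, ι d ∈ S ∧ Full G S (G.vert (ι d))) ∧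
    (∀ e ∈ S, Full G S (G.vert e) → ∃ d, ι d = e) ∧
    (∀ d d', G'.vert d = G'.vert d' ↔ G.vert (ι d) = G.vert (ι d')) ∧
    (∀ d, ι (G'.opp d) = G.opp (ι d)) ∧
    (∀ d, ∃ e, Relation.ReflTransGen (PassThrough G S) (ι d) e ∧ G.edge e ∈ S ∧
      Full G S (G.vert (G.edge e)) ∧ ι (G'.edge d) = G.edge e)

/-- A closed trail: a closed walk using every edge at most once (a cycle in
the sense of a closed curve in the graph). -/
def IsClosedTrail (G : FramedGraph) (m : ℕ) (f : ZMod m → G.D) : Prop :=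
  0 < m ∧ (∀ i, G.vert (f (i + 1)) = G.vert (G.edge (f i))) ∧
  (∀ i j, (f i = f j ∨ f i = G.edge (f j)) → i = j)

/-- The closed trail passes through `X` exactly once, and transversally:
it leaves `X` along the half-edge opposite to the one along which it arrived. -/
def PassesOnceTransversally (G : FramedGraph) (m : ℕ) (f : ZMod m → G.D) (X : G.V) : Prop :=
  (∃! i : ZMod m, G.vert (f i) = X) ∧
  (∀ i, G.vert (f i) = X → f i = G.opp (G.edge (f (i - 1))))

end FramedGraph

open FramedGraph

/-! Framed chord diagrams. -/

structure FramedChordDiagram : Type where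
  /-- number of chords; the core circle carries `2*n` endpoints, in cyclic
  order given by `Fin (2*n)` -/
  n : ℕ
  /-- the pairing of endpoints into chords -/
  mate : Fin (2 * n) → Fin (2 * n)
  mate_invol : ∀ i, mate (mate i) = i
  mate_ne : ∀ i, mate i ≠ i
  /-- the framing of the chord at each endpoint -/
  fr : Fin (2 * n) → Bool
  fr_mate : ∀ i, fr (mate i) = fr i

namespace FramedChordDiagram

/-- `x` lies strictly between `u` and `v` on the linear order. -/
def Between {m : ℕ} (u v x : Fin m) : Prop := min u v < x ∧ x < max u v

/-- The endpoints `i` and `j` belong to two distinct chords. -/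
def DistinctChords (D : FramedChordDiagram) (i j : Fin (2 * D.n)) : Prop :=
  j ≠ i ∧ j ≠ D.mate i

/-- The chords of `i` and `j` are linked: the two endpoints of the chord of `j`
lie in different connected components of the core circle with the endpoints of
the chord of `i` removed. -/
def Linked (D : FramedChordDiagram) (i j : Fin (2 * D.n)) : Prop :=
  DistinctChords D i j ∧
    ¬ (Between i (D.mate i) j ↔ Between i (D.mate i) (D.mate j))

/-- The endpoints of the two chords alternate around the circle:
a, b, a, b. -/
def Alternate (D : FramedChordDiagram) (i j : Fin (2 * D.n)) : Prop :=
  (min i (D.mate i) < min j (D.mate j) ∧ min j (D.mate j) < max i (D.mate i) ∧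
     max i (D.mate i) < max j (D.mate j)) ∨
  (min j (D.mate j) < min i (D.mate i) ∧ min i (D.mate i) < max j (D.mate j) ∧
     max j (D.mate j) < max i (D.mate i))

/-- `D'` is a subdiagram of `D`: obtained by deleting some chords
(framings respected). -/
def Subdiagram (D' D : FramedChordDiagram) : Prop :=
  ∃ ι : Fin (2 * D'.n) → Fin (2 * D.n), StrictMono ι ∧
    (∀ i, ι (D'.mate i) = D.mate (ι i)) ∧
    (∀ i, D'.fr i = D.fr (ι i))

/-- The graph `H` on the chords of `D`: two (distinct) chords are joined iff
they are linked and at least one has framing `0`, or they are unlinked and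
both have framing `1`.  (Stated on endpoints; it is mate-invariant.) -/
def Hadj (D : FramedChordDiagram) (i j : Fin (2 * D.n)) : Prop :=
  DistinctChords D i j ∧
    ((Linked D i j ∧ (D.fr i = false ∨ D.fr j = false)) ∨
     (¬ Linked D i j ∧ D.fr i = true ∧ D.fr j = true))

end FramedChordDiagram

open FramedChordDiagram

/-- The relation `adj` admits an odd cycle. -/
def HasOddCycle {α : Type*} (adj : α → α → Prop) : Prop :=
  ∃ (m : ℕ) (f : ZMod m → α), Odd m ∧ Function.Injective f ∧ ∀ i, adj (f i) (f (i + 1))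

/-- The rotating circuit `c` of `G` realizes the framed chord diagram `D`
(with offset `k` matching endpoints of `D` with steps of `c`): endpoints are
mated iff the corresponding passages of `c` arrive at the same vertex, and a
chord has framing `0` iff that vertex is good (the two arrivals are along
opposite half-edges). -/
def RealizesWith (G : FramedGraph) (c : RotatingCircuit G) (D : FramedChordDiagram)
    (k : ℕ) : Prop :=
  c.n = 2 * D.n ∧
  (∀ i j : Fin (2 * D.n), i ≠ j →
    (D.mate i = j ↔
      G.vert (G.edge (c.d (((i : ℕ) + k : ℕ) : ZMod c.n))) =
        G.vert (G.edge (c.d (((j : ℕ) + k : ℕ) : ZMod c.n))))) ∧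
  (∀ i : Fin (2 * D.n),
    (D.fr i = false ↔
      G.edge (c.d ((((D.mate i : ℕ) + k : ℕ)) : ZMod c.n)) =
        G.opp (G.edge (c.d (((i : ℕ) + k : ℕ) : ZMod c.n)))))

def Realizes (G : FramedGraph) (c : RotatingCircuit G) (D : FramedChordDiagram) : Prop :=
  ∃ k : ℕ, RealizesWith G c D k

/-- `G` is (a copy of) the framed 4-graph `G(D)` obtained from the framed
chord diagram `D`. -/
def GraphOf (D : FramedChordDiagram) (G : FramedGraph) : Prop :=
  ∃ c : RotatingCircuit G, Realizes G c D

/-! Concrete graphs: `Γ` and `Δ`. -/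

/-- The dart-pairing of `Γ`: darts `0,1` form one loop, darts `2,3` the other. -/
def gammaedge (d : ZMod 4) : ZMod 4 := if d.val % 2 = 0 then d + 1 else d - 1

/-- The graph `Γ`: one vertex, two loops, each loop opposite to itself
(its two half-edges form an opposite pair). -/
def GammaGraph : FramedGraph where
  D := ZMod 4
  V := Fin 1
  edge := gammaedge
  opp := gammaedge
  vert := fun _ => 0
  edge_invol := by decide
  edge_ne := by decide
  opp_invol := by decide
  opp_ne := by decide
  opp_vert := by decide
  degree_four := by
    intro v
    rw [Nat.card_eq_fintype_card]
    revert v; decide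

def deltaedge (d : ZMod 12) : ZMod 12 := if d.val % 2 = 0 then d + 1 else d - 1

def deltavert (d : ZMod 12) : ZMod 3 := ((d.val / 2 + d.val % 2 : ℕ) : ZMod 3)

/-- The graph `Δ`: the framed 4-graph of the chord diagram with three pairwise
linked chords of framing `0` (three vertices `0,1,2`, six edges, traversed in
the cyclic vertex order `0,1,2,0,1,2`). -/
def DeltaGraph : FramedGraph where
  D := ZMod 12
  V := ZMod 3
  edge := deltaedge
  opp := fun d => d + 6
  vert := deltavert
  edge_invol := by decide
  edge_ne := by decide
  opp_invol := by decide
  opp_ne := by decide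
  opp_vert := by decide
  degree_four := by
    intro v
    rw [Nat.card_eq_fintype_card]
    revert v; decide

/-- The framed chord diagram with a single chord, of framing `1`. -/
def D1 : FramedChordDiagram where
  n := 1
  mate := fun i => ⟨1 - i.val, by omega⟩
  mate_invol := by decide
  mate_ne := by decide
  fr := fun _ => true
  fr_mate := by decide

lemma mem_of_four {G : FramedGraph} {v : G.V} (a b c e x : {d : G.D // G.vert d = v})
    (hab : a ≠ b) (hac : a ≠ c) (hae : a ≠ e) (hbc : b ≠ c) (hbe : b ≠ e) (hce : c ≠ e) :
    x = a ∨ x = b ∨ x = c ∨ x = e := by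
  classical
  have h4 := G.degree_four v
  have hfin : Finite {d : G.D // G.vert d = v} :=
    Nat.finite_of_card_ne_zero (by omega)
  have := Fintype.ofFinite {d : G.D // G.vert d = v}
  have hcard : Fintype.card {d : G.D // G.vert d = v} = 4 := by
    rw [← Nat.card_eq_fintype_card]; exact h4
  have huniv : ({a, b, c, e} : Finset {d : G.D // G.vert d = v}) = Finset.univ := by
    apply Finset.eq_univ_of_card
    rw [hcard]
    rw [Finset.card_insert_of_notMem (by simp [hab, hac, hae]),
        Finset.card_insert_of_notMem (by simp [hbc, hbe]),
        Finset.card_insert_of_notMem (by simp [hce]),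
        Finset.card_singleton]
  have hx : x ∈ ({a, b, c, e} : Finset {d : G.D // G.vert d = v}) := by
    rw [huniv]; exact Finset.mem_univ x
  simpa using hx

lemma agree_step {G : FramedGraph} {S T : Set G.D} (hS : IsSourceSink G S)
    (hT : IsSourceSink G T) {d d' : G.D} (h : G.Adj d d') (hd : d ∈ S ↔ d ∈ T) :
    (d' ∈ S ↔ d' ∈ T) := by
  rcases h with he | hv
  · subst he
    have hs := (hS.1 (G.edge d))
    have ht := (hT.1 (G.edge d))
    rw [G.edge_invol] at hs ht
    rw [hs, ht]
    tauto
  · -- same vertex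
    obtain ⟨a, hav, haS, haoS, haU⟩ := hS.2 (G.vert d)
    obtain ⟨b, hbv, hbT, hboT, hbU⟩ := hT.2 (G.vert d)
    have hpair : b = a ∨ b = G.opp a := by
      by_contra hcon
      push_neg at hcon
      obtain ⟨hba, hboa⟩ := hcon
      have hoba : G.opp b ≠ a := fun h => hboa (by rw [← h, G.opp_invol])
      have hobo : G.opp b ≠ G.opp a := fun h => hba (by
        have := congrArg G.opp h; rwa [G.opp_invol, G.opp_invol] at this)
      -- the four darts a, opp a, b, opp b at v are pairwise distinct
      set xa : {x : G.D // G.vert x = G.vert d} := ⟨a, hav⟩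
      set xoa : {x : G.D // G.vert x = G.vert d} := ⟨G.opp a, by rw [G.opp_vert]; exact hav⟩
      set xb : {x : G.D // G.vert x = G.vert d} := ⟨b, hbv⟩
      set xob : {x : G.D // G.vert x = G.vert d} := ⟨G.opp b, by rw [G.opp_vert]; exact hbv⟩
      set xd : {x : G.D // G.vert x = G.vert d} := ⟨d, rfl⟩
      have h1 : xa ≠ xoa := fun h => G.opp_ne a (congrArg Subtype.val h).symm
      have h2 : xa ≠ xb := fun h => hba (congrArg Subtype.val h).symm
      have h3 : xa ≠ xob := fun h => hoba (congrArg Subtype.val h).symm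
      have h4 : xoa ≠ xb := fun h => hboa (congrArg Subtype.val h).symm
      have h5 : xoa ≠ xob := fun h => hobo (congrArg Subtype.val h).symm
      have h6 : xb ≠ xob := fun h => G.opp_ne b (congrArg Subtype.val h).symm
      have := mem_of_four xa xoa xb xob xd h1 h2 h3 h4 h5 h6
      -- translate back to darts
      have hd4 : d = a ∨ d = G.opp a ∨ d = b ∨ d = G.opp b := by
        rcases this with h | h | h | h
        · exact Or.inl (congrArg Subtype.val h)
        · exact Or.inr (Or.inl (congrArg Subtype.val h))
        · exact Or.inr (Or.inr (Or.inl (congrArg Subtype.val h)))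
        · exact Or.inr (Or.inr (Or.inr (congrArg Subtype.val h)))
      rcases hd4 with h | h | h | h
      · have hdT : d ∈ T := hd.mp (h.symm ▸ haS)
        rcases hbU d rfl hdT with h' | h'
        · exact hba (h'.symm.trans h)
        · exact hoba (h'.symm.trans h)
      · have hdT : d ∈ T := hd.mp (h.symm ▸ haoS)
        rcases hbU d rfl hdT with h' | h'
        · exact hboa (h'.symm.trans h)
        · exact hobo (h'.symm.trans h)
      · have hdS : d ∈ S := hd.mpr (h.symm ▸ hbT)
        rcases haU d rfl hdS with h' | h'
        · exact hba (h.symm.trans h')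
        · exact hboa (h.symm.trans h')
      · have hdS : d ∈ S := hd.mpr (h.symm ▸ hboT)
        rcases haU d rfl hdS with h' | h'
        · exact hoba (h.symm.trans h')
        · exact hobo (h.symm.trans h')
    -- pairs coincide: {a, opp a} = {b, opp b}
    have haT : a ∈ T ∧ G.opp a ∈ T := by
      rcases hpair with rfl | rfl
      · exact ⟨hbT, hboT⟩
      · rw [G.opp_invol] at hboT; exact ⟨hboT, hbT⟩
    have hbS : b ∈ S ∧ G.opp b ∈ S := by
      rcases hpair with rfl | rfl
      · exact ⟨haS, haoS⟩
      · exact ⟨haoS, by rw [G.opp_invol]; exact haS⟩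
    constructor
    · intro hmem
      rcases haU d' hv.symm hmem with rfl | rfl
      · exact haT.1
      · exact haT.2
    · intro hmem
      rcases hbU d' hv.symm hmem with rfl | rfl
      · exact hbS.1
      · exact hbS.2

/-- A connected framed 4-valent graph admits at most two
source-sink structures. -/
theorem connected_at_most_two_source_sink (G : FramedGraph) (hG : G.Connected)
    (S₁ S₂ S₃ : Set G.D)
    (h₁ : IsSourceSink G S₁) (h₂ : IsSourceSink G S₂) (h₃ : IsSourceSink G S₃) :
    S₁ = S₂ ∨ S₁ = S₃ ∨ S₂ = S₃ := by
  classical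
  by_cases hD : Nonempty G.D
  · obtain ⟨d₀⟩ := hD
    have key : ∀ S T : Set G.D, IsSourceSink G S → IsSourceSink G T →
        (d₀ ∈ S ↔ d₀ ∈ T) → S = T := by
      intro S T hS hT h0
      ext e
      have hpath := hG d₀ e
      induction hpath with
      | refl => exact h0
      | tail _ hadj ih => exact agree_step hS hT hadj ih
    by_cases hA : d₀ ∈ S₁ ↔ d₀ ∈ S₂
    · exact Or.inl (key _ _ h₁ h₂ hA)
    · by_cases hB : d₀ ∈ S₁ ↔ d₀ ∈ S₃
      · exact Or.inr (Or.inl (key _ _ h₁ h₃ hB))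
      · exact Or.inr (Or.inr (key _ _ h₂ h₃ (by tauto)))
  · left
    ext x
    exact absurd ⟨x⟩ hD
end

section
/- If a framed 4-valent graph admits a source-sink structure, then any graph obtained from it by smoothing at a vertex also admits a source-sink structure. -/
open FramedGraph

open FramedChordDiagram

/-- If a framed 4-valent graph admits a source-sink structure,
then any graph obtained from it by smoothing at a vertex also admits a
source-sink structure. -/
theorem smoothing_admits_source_sink (G G' : FramedGraph) (X : G.V)
    (h : G.IsSmoothingAt G' X) (S : Set G.D) (hS : IsSourceSink G S) :
    ∃ S' : Set G'.D, IsSourceSink G' S' := by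
  classical
  obtain ⟨ι, p, hinj, hnotX, hsurj, hvert, hopp, hp, hedge⟩ := h
  obtain ⟨hS1, hS2⟩ := hS
  have atX : ∀ e, G.vert e = X → (e ∈ S ↔ p e ∉ S) := by
    intro e he
    obtain ⟨a, haX, haS, haoS, huniq⟩ := hS2 X
    obtain ⟨hpeX, hppe, hpene, hpeno⟩ := hp e he
    constructor
    · intro heS hpeS
      rcases huniq (p e) hpeX hpeS with h1 | h1
      · rcases huniq e he heS with h2 | h2
        · exact hpene (h1.trans h2.symm)
        · exact hpeno (by rw [h1, h2, G.opp_invol])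
      · rcases huniq e he heS with h2 | h2
        · exact hpeno (by rw [h1, h2])
        · exact hpene (h1.trans h2.symm)
    · intro hpeS
      by_contra heS
      have hoe : G.opp e ∉ S := by
        intro hc
        rcases huniq _ (by rw [G.opp_vert, he]) hc with h1 | h1
        · exact heS (by rw [← G.opp_invol e, h1]; exact haoS)
        · have h2 : e = a := by
            have := congrArg G.opp h1; rwa [G.opp_invol, G.opp_invol] at this
          exact heS (h2 ▸ haS)
      -- five distinct darts at X
      have hfin : Finite {d : G.D // G.vert d = X} := by
        have h4 := G.degree_four X
        exact (Nat.card_pos_iff.mp (by omega)).2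
      have haoX : G.vert (G.opp a) = X := by rw [G.opp_vert, haX]
      have hoeX : G.vert (G.opp e) = X := by rw [G.opp_vert, he]
      have hinjf : Function.Injective (fun i : Fin 5 =>
          (match i with
          | 0 => ⟨a, haX⟩
          | 1 => ⟨G.opp a, haoX⟩
          | 2 => ⟨e, he⟩
          | 3 => ⟨G.opp e, hoeX⟩
          | 4 => ⟨p e, hpeX⟩ : {d : G.D // G.vert d = X})) := by
        have hne1 : a ≠ G.opp a := (G.opp_ne a).symm
        have hne2 : a ≠ e := fun hc => heS (hc ▸ haS)
        have hne3 : a ≠ G.opp e := fun hc => hoe (hc ▸ haS)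
        have hne4 : a ≠ p e := fun hc => hpeS (hc ▸ haS)
        have hne5 : G.opp a ≠ e := fun hc => heS (hc ▸ haoS)
        have hne6 : G.opp a ≠ G.opp e := fun hc => hoe (hc ▸ haoS)
        have hne7 : G.opp a ≠ p e := fun hc => hpeS (hc ▸ haoS)
        have hne8 : e ≠ G.opp e := (G.opp_ne e).symm
        have hne9 : e ≠ p e := fun hc => hpene hc.symm
        have hne10 : G.opp e ≠ p e := fun hc => hpeno hc.symm
        intro i j hij
        fin_cases i <;> fin_cases j <;>
          simp only [Subtype.mk.injEq] at hij ⊢ <;>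
          first
          | rfl
          | exact absurd hij hne1 | exact absurd hij hne2 | exact absurd hij hne3
          | exact absurd hij hne4 | exact absurd hij hne5 | exact absurd hij hne6
          | exact absurd hij hne7 | exact absurd hij hne8 | exact absurd hij hne9
          | exact absurd hij hne10
          | exact absurd hij.symm hne1 | exact absurd hij.symm hne2
          | exact absurd hij.symm hne3 | exact absurd hij.symm hne4
          | exact absurd hij.symm hne5 | exact absurd hij.symm hne6
          | exact absurd hij.symm hne7 | exact absurd hij.symm hne8
          | exact absurd hij.symm hne9 | exact absurd hij.symm hne10
      have hcard : Nat.card (Fin 5) ≤ Nat.card {d : G.D // G.vert d = X} :=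
        Nat.card_le_card_of_injective _ hinjf
      simp [G.degree_four X] at hcard
  have key : ∀ e : G.D, (e ∈ S ↔ G.smoothEdge X p e ∉ S) := by
    intro e
    unfold smoothEdge
    split_ifs with h1 h2
    · exact hS1 e
    · push_neg at h1
      rw [hS1 e, atX _ h1, not_not]
      exact hS1 _
    · push_neg at h1 h2
      rw [hS1 e, atX _ h1, not_not, hS1 (p (G.edge e)), atX _ h2, not_not]
      exact hS1 _
  refine ⟨{d | ι d ∈ S}, ?_, ?_⟩
  · intro d
    show ι d ∈ S ↔ ¬ ι (G'.edge d) ∈ S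
    rw [hedge d]
    exact key (ι d)
  · intro v
    have hne : Nonempty {d : G'.D // G'.vert d = v} := by
      have h4 := G'.degree_four v
      exact (Nat.card_pos_iff.mp (by omega)).1
    obtain ⟨d0, hd0⟩ := hne.some
    obtain ⟨a, haw, haS, haoS, huniq⟩ := hS2 (G.vert (ι d0))
    obtain ⟨d, hd⟩ := hsurj a (by rw [haw]; exact hnotX d0)
    have hdv : G'.vert d = v := by
      rw [← hd0, (hvert d d0), hd, haw]
    refine ⟨d, hdv, by show ι d ∈ S; rw [hd]; exact haS, ?_, ?_⟩
    · show ι (G'.opp d) ∈ S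
      rw [hopp d, hd]; exact haoS
    · intro d' hd'v hd'S
      have hw : G.vert (ι d') = G.vert (ι d0) := by
        rw [← (hvert d' d0), hd'v, hd0]
      rcases huniq (ι d') hw hd'S with h1 | h1
      · left; exact hinj (by rw [h1, hd])
      · right; exact hinj (by rw [hopp d, h1, hd])
end

section
/- If a framed 4-graph contains two edge-disjoint cycles sharing exactly one vertex at which they cross transversally (each cycle passes through the vertex along a pair of opposite half-edges), then it contains Γ as an s-minor; in particular Γ is an s-minor of Δ but not a minor of Δ. -/
open FramedGraph

open FramedChordDiagram

/-! Shortening a closed trail at a repeated vertex, and keeping the piece through `X`, produces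
a cycle through `X` without repeated vertices that still crosses `X` transversally. Two such cycles
meeting only at `X` span an even subgraph in which `X` is the only vertex of valency 4; suppressing
the other vertices leaves two loops at `X`, each one self-opposite by transversality: this is `Γ`.

`Γ` is not a minor of `Δ` because smoothings, deletions of components and isomorphisms preserve
the existence of a source-sink structure: `Δ` has one, while in `Γ` the two incoming half-edges at
the vertex would have to be opposite, hence the two ends of one loop. -/

namespace FramedGraph

variable {G : FramedGraph}

lemma edge_injective : Function.Injective G.edge :=
  Function.LeftInverse.injective G.edge_invol

lemma finite_setOf_vert_eq (v : G.V) : {d | G.vert d = v}.Finite :=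
  Nat.finite_of_card_ne_zero
    (show Nat.card {d // G.vert d = v} ≠ 0 by rw [G.degree_four]; norm_num)

lemma exists_vert_eq (v : G.V) : ∃ d, G.vert d = v := by
  by_contra h
  have : IsEmpty {d // G.vert d = v} := ⟨fun d => h ⟨d.1, d.2⟩⟩
  have h4 := G.degree_four v
  rw [Nat.card_of_isEmpty] at h4
  exact absurd h4 (by norm_num)

lemma eq_or_eq_or_eq_or_eq_of_vert_eq {v : G.V} {a b c d x : G.D} (ha : G.vert a = v)
    (hb : G.vert b = v) (hc : G.vert c = v) (hd : G.vert d = v) (hab : a ≠ b) (hac : a ≠ c)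
    (had : a ≠ d) (hbc : b ≠ c) (hbd : b ≠ d) (hcd : c ≠ d) (hx : G.vert x = v) :
    x = a ∨ x = b ∨ x = c ∨ x = d := by
  have hsub : ({a, b, c, d} : Set G.D) ⊆ {y | G.vert y = v} := by
    rintro y (rfl | rfl | rfl | rfl) <;> assumption
  have hcard : ({a, b, c, d} : Set G.D).ncard = 4 := by
    rw [Set.ncard_insert_of_notMem (by simp [hab, hac, had]),
      Set.ncard_insert_of_notMem (by simp [hbc, hbd]), Set.ncard_pair hcd]
  have heq := Set.eq_of_subset_of_ncard_le hsub
    (by rw [hcard]; exact (G.degree_four v).le) (finite_setOf_vert_eq v)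
  exact heq.symm.subset hx

lemma sdeg_eq_ncard (S : Set G.D) (v : G.V) :
    G.sdeg S v = {d | G.vert d = v ∧ d ∈ S}.ncard :=
  rfl

lemma sdeg_union {S T : Set G.D} (hST : Disjoint S T) (v : G.V) :
    G.sdeg (S ∪ T) v = G.sdeg S v + G.sdeg T v := by
  have hfin : ∀ U : Set G.D, {d | G.vert d = v ∧ d ∈ U}.Finite := fun U =>
    (finite_setOf_vert_eq v).subset fun d hd => hd.1
  simp only [sdeg_eq_ncard]
  rw [← Set.ncard_union_eq _ (hfin S) (hfin T)]
  · congr 1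
    ext d
    simp [and_or_left]
  · exact Set.disjoint_left.2 fun d hS hT => hST.ne_of_mem hS.2 hT.2 rfl

lemma sdeg_eq_zero {S : Set G.D} {v : G.V} (h : ∀ d ∈ S, G.vert d ≠ v) : G.sdeg S v = 0 :=
  have : IsEmpty {d // G.vert d = v ∧ d ∈ S} := ⟨fun d => h d.1 d.2.2 d.2.1⟩
  Nat.card_of_isEmpty

lemma full_iff_sdeg_eq_four {S : Set G.D} {v : G.V} : G.Full S v ↔ G.sdeg S v = 4 := by
  have hall : {d | G.vert d = v}.ncard = 4 := G.degree_four v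
  have hsub : {d | G.vert d = v ∧ d ∈ S} ⊆ {d | G.vert d = v} := fun d hd => hd.1
  rw [sdeg_eq_ncard]
  constructor
  · intro hfull
    rw [← hall]
    congr 1
    ext d
    exact ⟨fun hd => hd.1, fun hd => ⟨hd, hfull d hd⟩⟩
  · intro h d hd
    have heq := Set.eq_of_subset_of_ncard_le hsub (by rw [h, hall]) (finite_setOf_vert_eq v)
    exact (heq.symm.subset hd).2

lemma sminorOf_gamma_of_two_loops {S : Set G.D} {X : G.V} {a b : G.D}
    (hS : ∀ d ∈ S, G.edge d ∈ S) (heven : ∀ v, Even (G.sdeg S v))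
    (hfull : ∀ v, G.Full S v ↔ v = X) (ha : G.vert a = X) (hb : G.vert b = X)
    (hab : a ≠ b) (hab' : a ≠ G.opp b)
    (hloop_a : ∃ e, Relation.ReflTransGen (G.PassThrough S) a e ∧ G.edge e = G.opp a)
    (hloop_a' : ∃ e, Relation.ReflTransGen (G.PassThrough S) (G.opp a) e ∧ G.edge e = a)
    (hloop_b : ∃ e, Relation.ReflTransGen (G.PassThrough S) b e ∧ G.edge e = G.opp b)
    (hloop_b' : ∃ e, Relation.ReflTransGen (G.PassThrough S) (G.opp b) e ∧ G.edge e = b) :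
    SMinorOf GammaGraph G := by
  have hX : G.Full S X := (hfull X).2 rfl
  let ι : ZMod 4 → G.D := ![a, G.opp a, b, G.opp b]
  have hvert : ∀ d, G.vert (ι d) = X := by
    intro d; fin_cases d <;> simp [ι, G.opp_vert, ha, hb]
  have hinj : Function.Injective ι := by
    have h01 : a ≠ G.opp a := (G.opp_ne a).symm
    have h23 : b ≠ G.opp b := (G.opp_ne b).symm
    have h12 : G.opp a ≠ b := fun h => hab' (by rw [← h, G.opp_invol])
    have h13 : G.opp a ≠ G.opp b := fun h => hab (by rw [← G.opp_invol a, h, G.opp_invol])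
    intro d d' h
    fin_cases d <;> fin_cases d' <;> first | rfl | exact absurd h ‹_› | exact absurd h.symm ‹_›
  have hopp : ∀ d, ι (gammaedge d) = G.opp (ι d) := by
    intro d; fin_cases d
    · rfl
    · exact (G.opp_invol a).symm
    · rfl
    · exact (G.opp_invol b).symm
  have hloop : ∀ d, ∃ e, Relation.ReflTransGen (G.PassThrough S) (ι d) e ∧ G.edge e ∈ S ∧
      G.Full S (G.vert (G.edge e)) ∧ ι (gammaedge d) = G.edge e := by
    have hclose : ∀ x y, G.vert y = X → (∃ e, Relation.ReflTransGen (G.PassThrough S) x e ∧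
        G.edge e = y) → ∃ e, Relation.ReflTransGen (G.PassThrough S) x e ∧ G.edge e ∈ S ∧
          G.Full S (G.vert (G.edge e)) ∧ y = G.edge e := by
      rintro x y hy ⟨e, hxe, rfl⟩
      exact ⟨e, hxe, hX _ hy, hy ▸ hX, rfl⟩
    intro d; fin_cases d
    · exact hclose _ _ (hvert 1) hloop_a
    · exact hclose _ _ (hvert 0) hloop_a'
    · exact hclose _ _ (hvert 3) hloop_b
    · exact hclose _ _ (hvert 2) hloop_b'
  have hcover : ∀ e, G.vert e = X → ∃ d, ι d = e := by
    intro e he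
    rcases eq_or_eq_or_eq_or_eq_of_vert_eq (hvert 0) (hvert 1) (hvert 2) (hvert 3)
      (hinj.ne (by decide)) (hinj.ne (by decide)) (hinj.ne (by decide)) (hinj.ne (by decide))
      (hinj.ne (by decide)) (hinj.ne (by decide)) he with rfl | rfl | rfl | rfl
    exacts [⟨0, rfl⟩, ⟨1, rfl⟩, ⟨2, rfl⟩, ⟨3, rfl⟩]
  exact ⟨S, ι, hS, heven, hinj, fun d => ⟨hX _ (hvert d), (hvert d).symm ▸ hX⟩,
    fun e _ he => hcover e ((hfull _).1 he),
    fun d d' => iff_of_true rfl ((hvert d).trans (hvert d').symm), hopp, hloop⟩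

variable {m : ℕ} {f : ZMod m → G.D}

def trailDarts (f : ZMod m → G.D) : Set G.D := Set.range f ∪ Set.range (G.edge ∘ f)

lemma edge_mem_trailDarts {d : G.D} (hd : d ∈ trailDarts f) : G.edge d ∈ trailDarts f := by
  rcases hd with ⟨i, rfl⟩ | ⟨i, rfl⟩
  · exact .inr ⟨i, rfl⟩
  · exact .inl ⟨i, (G.edge_invol _).symm⟩

lemma trailDarts_mono {n : ℕ} {f' : ZMod n → G.D} (h : Set.range f' ⊆ Set.range f) :
    trailDarts f' ⊆ trailDarts f := by
  rintro _ (⟨i, rfl⟩ | ⟨i, rfl⟩) <;> obtain ⟨k, hk⟩ := h ⟨i, rfl⟩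
  exacts [.inl ⟨k, hk⟩, .inr ⟨k, by simp [hk]⟩]

lemma disjoint_trailDarts {n : ℕ} {g : ZMod n → G.D}
    (h : ∀ i j, f i ≠ g j ∧ f i ≠ G.edge (g j)) : Disjoint (trailDarts f) (trailDarts g) := by
  rw [Set.disjoint_left]
  rintro _ (⟨i, rfl⟩ | ⟨i, rfl⟩) (⟨j, hj⟩ | ⟨j, hj⟩)
  · exact (h i j).1 hj.symm
  · exact (h i j).2 hj.symm
  · exact (h i j).2 (by rw [hj, Function.comp_apply, G.edge_invol])
  · exact (h i j).1 (G.edge_injective hj.symm)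

lemma IsClosedTrail.vert_edge (hf : IsClosedTrail G m f) (i : ZMod m) :
    G.vert (G.edge (f i)) = G.vert (f (i + 1)) :=
  (hf.2.1 i).symm

lemma IsClosedTrail.ne_edge (hf : IsClosedTrail G m f) (i j : ZMod m) : f i ≠ G.edge (f j) := by
  intro h
  obtain rfl := hf.2.2 i j (Or.inr h)
  exact G.edge_ne _ h.symm

lemma IsClosedTrail.vert_mem_range (hf : IsClosedTrail G m f) {d : G.D}
    (hd : d ∈ trailDarts f) : G.vert d ∈ Set.range (G.vert ∘ f) := by
  rcases hd with ⟨i, rfl⟩ | ⟨i, rfl⟩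
  · exact ⟨i, rfl⟩
  · exact ⟨i + 1, (hf.vert_edge i).symm⟩

lemma IsClosedTrail.trailDarts_at (hf : IsClosedTrail G m f)
    (hinj : Function.Injective (G.vert ∘ f)) (i : ZMod m) :
    {d | G.vert d = G.vert (f i) ∧ d ∈ trailDarts f} = {f i, G.edge (f (i - 1))} := by
  ext d
  simp only [Set.mem_ofPred_eq, Set.mem_insert_iff, Set.mem_singleton_iff]
  constructor
  · rintro ⟨hv, ⟨k, rfl⟩ | ⟨k, rfl⟩⟩
    · exact .inl (congrArg f (hinj hv))
    · have hk : k + 1 = i := hinj ((hf.vert_edge k).symm.trans hv)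
      exact .inr (by rw [← hk, add_sub_cancel_right]; rfl)
  · rintro (rfl | rfl)
    · exact ⟨rfl, .inl ⟨i, rfl⟩⟩
    · exact ⟨by rw [hf.vert_edge, sub_add_cancel], .inr ⟨i - 1, rfl⟩⟩

open Classical in
lemma IsClosedTrail.sdeg_trailDarts (hf : IsClosedTrail G m f)
    (hinj : Function.Injective (G.vert ∘ f)) (v : G.V) :
    G.sdeg (trailDarts f) v = if v ∈ Set.range (G.vert ∘ f) then 2 else 0 := by
  split_ifs with hv
  · obtain ⟨i, rfl⟩ := hv
    rw [sdeg_eq_ncard, Function.comp_apply, hf.trailDarts_at hinj,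
      Set.ncard_pair (hf.ne_edge _ _)]
  · exact sdeg_eq_zero fun _ hd hdv => hv (hdv ▸ hf.vert_mem_range hd)

def reverseTrail (f : ZMod m → G.D) : ZMod m → G.D := fun k => G.edge (f (-k - 1))

lemma IsClosedTrail.vert_reverseTrail (hf : IsClosedTrail G m f) (k : ZMod m) :
    G.vert (reverseTrail f k) = G.vert (f (-k)) := by
  rw [reverseTrail, hf.vert_edge, sub_add_cancel]

lemma IsClosedTrail.reverse (hf : IsClosedTrail G m f) :
    IsClosedTrail G m (reverseTrail f) := by
  refine ⟨hf.1, fun i => ?_, fun i j hij => ?_⟩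
  · rw [hf.vert_reverseTrail, reverseTrail, G.edge_invol, neg_add']
  · have : -i - 1 = -j - 1 := by
      simp only [reverseTrail, G.edge_invol] at hij
      rcases hij with h | h
      · exact hf.2.2 _ _ (.inl (G.edge_injective h))
      · exact (hf.2.2 _ _ (.inr h.symm)).symm
    simpa using this

lemma trailDarts_reverseTrail : trailDarts (reverseTrail f) = trailDarts f := by
  have hσ : Function.Surjective fun k : ZMod m => -k - 1 :=
    Function.Involutive.surjective fun k => by ring
  have hrev : reverseTrail f = (G.edge ∘ f) ∘ fun k => -k - 1 := rfl
  have hedge : G.edge ∘ reverseTrail f = f ∘ fun k => -k - 1 := by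
    funext k; exact G.edge_invol _
  rw [trailDarts, trailDarts, hedge, hrev, hσ.range_comp, hσ.range_comp, Set.union_comm]

lemma IsClosedTrail.passThrough_succ (hf : IsClosedTrail G m f) {S : Set G.D}
    (hS : trailDarts f ⊆ S) {k : ZMod m} (hk : G.sdeg S (G.vert (f (k + 1))) = 2) :
    G.PassThrough S (f k) (f (k + 1)) :=
  ⟨hS (.inr ⟨k, rfl⟩), by rwa [hf.vert_edge], hS (.inl ⟨k + 1, rfl⟩), hf.ne_edge _ _,
    (hf.vert_edge k).symm⟩

lemma IsClosedTrail.reflTransGen_passThrough (hf : IsClosedTrail G m f) {S : Set G.D}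
    (hS : trailDarts f ⊆ S) (hdeg : ∀ k ≠ 0, G.sdeg S (G.vert (f k)) = 2) :
    Relation.ReflTransGen (G.PassThrough S) (f 0) (f (-1)) := by
  have hm := hf.1
  have hprefix : ∀ t : ℕ, t < m → Relation.ReflTransGen (G.PassThrough S) (f 0) (f t) := by
    intro t
    induction t with
    | zero => intro _; rw [Nat.cast_zero]
    | succ t ih =>
      intro ht
      rw [Nat.cast_succ]
      refine (ih (by omega)).tail (hf.passThrough_succ hS (hdeg _ fun h => ?_))
      rw [← Nat.cast_succ, ZMod.natCast_eq_zero_iff] at h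
      exact absurd (Nat.le_of_dvd t.succ_pos h) (by omega)
  simpa [Nat.cast_pred hm] using hprefix (m - 1) (by omega)

structure IsSimpleTransverseCycle (G : FramedGraph) (m : ℕ) (f : ZMod m → G.D) (X : G.V) :
    Prop where
  isClosedTrail : IsClosedTrail G m f
  vert_injective : Function.Injective (G.vert ∘ f)
  vert_zero : G.vert (f 0) = X
  transverse : f 0 = G.opp (G.edge (f (-1)))

lemma IsSimpleTransverseCycle.opp_zero {X : G.V} (hf : G.IsSimpleTransverseCycle m f X) :
    G.opp (f 0) = G.edge (f (-1)) := by
  rw [hf.transverse, G.opp_invol]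

lemma IsSimpleTransverseCycle.exists_loops {X : G.V} (hf : G.IsSimpleTransverseCycle m f X)
    {S : Set G.D} (hS : trailDarts f ⊆ S) (hdeg : ∀ k ≠ 0, G.sdeg S (G.vert (f k)) = 2) :
    (∃ e, Relation.ReflTransGen (G.PassThrough S) (f 0) e ∧ G.edge e = G.opp (f 0)) ∧
      ∃ e, Relation.ReflTransGen (G.PassThrough S) (G.opp (f 0)) e ∧ G.edge e = f 0 := by
  have htrail := hf.isClosedTrail
  refine ⟨⟨f (-1), htrail.reflTransGen_passThrough hS hdeg, hf.opp_zero.symm⟩,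
    ⟨G.edge (f 0), ?_, G.edge_invol _⟩⟩
  have hrev := htrail.reverse.reflTransGen_passThrough (trailDarts_reverseTrail (f := f) ▸ hS)
    fun k hk => by rw [htrail.vert_reverseTrail]; exact hdeg _ (neg_ne_zero.2 hk)
  simpa [reverseTrail, hf.opp_zero] using hrev

theorem sminorOf_gamma_of_isSimpleTransverseCycle {m₁ m₂ : ℕ} {f : ZMod m₁ → G.D}
    {g : ZMod m₂ → G.D} {X : G.V} (hf : G.IsSimpleTransverseCycle m₁ f X)
    (hg : G.IsSimpleTransverseCycle m₂ g X) (hdisj : Disjoint (trailDarts f) (trailDarts g))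
    (hshare : ∀ v ∈ Set.range (G.vert ∘ f), v ∈ Set.range (G.vert ∘ g) → v = X) :
    SMinorOf GammaGraph G := by
  classical
  set S := trailDarts f ∪ trailDarts g
  have hdeg : ∀ v, G.sdeg S v = (if v ∈ Set.range (G.vert ∘ f) then 2 else 0) +
      (if v ∈ Set.range (G.vert ∘ g) then 2 else 0) := fun v => by
    rw [sdeg_union hdisj, hf.isClosedTrail.sdeg_trailDarts hf.vert_injective,
      hg.isClosedTrail.sdeg_trailDarts hg.vert_injective]
  have hdeg_f : ∀ k ≠ 0, G.sdeg S (G.vert (f k)) = 2 := fun k hk => by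
    have hg_not : G.vert (f k) ∉ Set.range (G.vert ∘ g) := fun hv =>
      hk (hf.vert_injective ((hshare _ ⟨k, rfl⟩ hv).trans hf.vert_zero.symm))
    rw [hdeg, if_pos ⟨k, rfl⟩, if_neg hg_not]
  have hdeg_g : ∀ k ≠ 0, G.sdeg S (G.vert (g k)) = 2 := fun k hk => by
    have hf_not : G.vert (g k) ∉ Set.range (G.vert ∘ f) := fun hv =>
      hk (hg.vert_injective ((hshare _ hv ⟨k, rfl⟩).trans hg.vert_zero.symm))
    rw [hdeg, if_neg hf_not, if_pos ⟨k, rfl⟩]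
  have hfull : ∀ v, G.Full S v ↔ v = X := fun v => by
    rw [full_iff_sdeg_eq_four, hdeg]
    constructor
    · intro h
      split_ifs at h with h₁ h₂ <;> first | exact hshare v h₁ h₂ | omega
    · rintro rfl
      rw [if_pos ⟨0, hf.vert_zero⟩, if_pos ⟨0, hg.vert_zero⟩]
  obtain ⟨hloop_f, hloop_f'⟩ := hf.exists_loops Set.subset_union_left hdeg_f
  obtain ⟨hloop_g, hloop_g'⟩ := hg.exists_loops Set.subset_union_right hdeg_g
  refine sminorOf_gamma_of_two_loops (S := S) ?_ (fun v => ?_) hfull hf.vert_zero hg.vert_zero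
    (hdisj.ne_of_mem (.inl ⟨0, rfl⟩) (.inl ⟨0, rfl⟩)) ?_ hloop_f hloop_f' hloop_g hloop_g'
  · rintro d (hd | hd)
    exacts [.inl (edge_mem_trailDarts hd), .inr (edge_mem_trailDarts hd)]
  · rw [hdeg]
    split_ifs <;> decide
  · rw [hg.opp_zero]
    exact hdisj.ne_of_mem (.inl ⟨0, rfl⟩) (.inr ⟨-1, rfl⟩)

lemma IsClosedTrail.comp_add_right (hf : IsClosedTrail G m f) (c : ZMod m) :
    IsClosedTrail G m (fun k => f (k + c)) :=
  ⟨hf.1, fun i => by simpa only [add_right_comm] using hf.2.1 (i + c),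
    fun _ _ h => add_right_cancel (hf.2.2 _ _ h)⟩

lemma IsClosedTrail.segment (hf : IsClosedTrail G m f) {c : ZMod m} {n : ℕ} (hn : 0 < n)
    (hnm : n ≤ m) (hv : G.vert (f (c + n)) = G.vert (f c)) :
    IsClosedTrail G n (fun k : ZMod n => f (c + k.val)) := by
  have : NeZero n := ⟨hn.ne'⟩
  refine ⟨hn, fun k => ?_, fun k l hkl => ?_⟩
  · have hsucc : (k + 1).val = (k.val + 1) % n := by
      rw [ZMod.val_add, ZMod.val_one_eq_one_mod, Nat.add_mod_mod]
    beta_reduce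
    rw [hf.vert_edge, add_assoc, hsucc]
    rcases (Nat.succ_le_of_lt k.val_lt).lt_or_eq with hlt | heq
    · rw [Nat.mod_eq_of_lt hlt, Nat.cast_succ]
    · rw [Nat.succ_eq_add_one] at heq
      rw [heq, Nat.mod_self, Nat.cast_zero, add_zero, ← Nat.cast_add_one, heq, hv]
  · exact ZMod.val_injective n (CharP.natCast_injOn_Iio (ZMod m) m
      (k.val_lt.trans_le hnm) (l.val_lt.trans_le hnm) (add_left_cancel (hf.2.2 _ _ hkl)))

lemma PassesOnceTransversally.segment {X : G.V} (hX : PassesOnceTransversally G m f X)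
    {c : ZMod m} {n t : ℕ} (hnm : n ≤ m) (ht : 0 < t) (htn : t < n)
    (hct : G.vert (f (c + t)) = X) :
    PassesOnceTransversally G n (fun k : ZMod n => f (c + k.val)) X := by
  have : NeZero n := ⟨by omega⟩
  have htval : (t : ZMod n).val = t := ZMod.val_cast_of_lt htn
  obtain ⟨⟨i₀, -, hi₀⟩, htr⟩ := hX
  have hX_iff : ∀ k : ZMod n, G.vert (f (c + k.val)) = X ↔ k = t := fun k => by
    refine ⟨fun hk => ?_, fun hk => by rw [hk, htval]; exact hct⟩
    have hkt := CharP.natCast_injOn_Iio (ZMod m) m (k.val_lt.trans_le hnm)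
      (htn.trans_le hnm) (add_left_cancel ((hi₀ _ hk).trans (hi₀ _ hct).symm))
    rw [← ZMod.natCast_zmod_val k, hkt]
  refine ⟨⟨t, (hX_iff _).2 rfl, fun k hk => (hX_iff k).1 hk⟩, fun k hk => ?_⟩
  obtain rfl := (hX_iff k).1 hk
  have hpred : ((t : ZMod n) - 1).val = t - 1 := by
    rw [← Nat.cast_pred ht, ZMod.val_cast_of_lt (by omega)]
  beta_reduce
  rw [hpred, Nat.cast_pred ht, ← add_sub_assoc, htval]
  exact htr _ hct

lemma _root_.ZMod.val_sub_lt_or_val_sub_lt [NeZero m] {i j : ZMod m} (hij : i ≠ j) (x : ZMod m) :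
    (x - i).val < (j - i).val ∨ (x - j).val < (i - j).val := by
  have : NeZero (j - i) := ⟨sub_ne_zero.2 hij.symm⟩
  refine (lt_or_ge (x - i).val (j - i).val).imp_right fun hle => ?_
  have hx := (x - i).val_lt
  rw [show x - j = (x - i) - (j - i) by ring, ZMod.val_sub hle,
    show i - j = -(j - i) by ring, ZMod.val_neg_of_ne_zero]
  omega

/-- A repeated vertex `i ~ j` cuts the trail into the closed trails `[i, j)` and `[j, i)`; the
passage through `X` lies strictly inside one of them, since `X` is visited only once. -/
lemma PassesOnceTransversally.exists_shorter {X : G.V} (hf : IsClosedTrail G m f)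
    (hX : PassesOnceTransversally G m f X) (hinj : ¬ Function.Injective (G.vert ∘ f)) :
    ∃ n < m, ∃ f' : ZMod n → G.D, IsClosedTrail G n f' ∧ PassesOnceTransversally G n f' X ∧
      Set.range f' ⊆ Set.range f := by
  have : NeZero m := ⟨hf.1.ne'⟩
  obtain ⟨i₀, hi₀, huniq⟩ := hX.1
  have hsegment : ∀ i j, i ≠ j → G.vert (f i) = G.vert (f j) → (i₀ - i).val < (j - i).val →
      ∃ n < m, ∃ f' : ZMod n → G.D, IsClosedTrail G n f' ∧ PassesOnceTransversally G n f' X ∧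
        Set.range f' ⊆ Set.range f := by
    intro i j hij hv ht
    have hi : i ≠ i₀ := by
      rintro rfl
      exact hij (huniq j (hv.symm.trans hi₀)).symm
    refine ⟨(j - i).val, (j - i).val_lt, fun k => f (i + k.val),
      hf.segment ?_ (j - i).val_lt.le ?_, hX.segment (j - i).val_lt.le ?_ ht ?_, ?_⟩
    · exact ZMod.val_pos.2 (sub_ne_zero.2 hij.symm)
    · rw [ZMod.natCast_zmod_val, add_sub_cancel, hv]
    · exact ZMod.val_pos.2 (sub_ne_zero.2 hi.symm)
    · rw [ZMod.natCast_zmod_val, add_sub_cancel, hi₀]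
    · rintro _ ⟨k, rfl⟩
      exact ⟨_, rfl⟩
  obtain ⟨i, j, hv, hij⟩ := Function.not_injective_iff.1 hinj
  rcases ZMod.val_sub_lt_or_val_sub_lt hij i₀ with ht | ht
  · exact hsegment i j hij hv ht
  · exact hsegment j i hij.symm hv.symm ht

lemma PassesOnceTransversally.isSimpleTransverseCycle {X : G.V} (hf : IsClosedTrail G m f)
    (hX : PassesOnceTransversally G m f X) (hinj : Function.Injective (G.vert ∘ f)) :
    ∃ c, G.IsSimpleTransverseCycle m (fun k => f (k + c)) X := by
  obtain ⟨i₀, hi₀, -⟩ := hX.1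
  exact ⟨i₀, hf.comp_add_right i₀, hinj.comp (add_left_injective i₀), by simpa using hi₀,
    by simpa [neg_add_eq_sub] using hX.2 i₀ hi₀⟩

theorem PassesOnceTransversally.exists_isSimpleTransverseCycle {X : G.V}
    (hf : IsClosedTrail G m f) (hX : PassesOnceTransversally G m f X) :
    ∃ n, ∃ f' : ZMod n → G.D, G.IsSimpleTransverseCycle n f' X ∧ Set.range f' ⊆ Set.range f := by
  induction m using Nat.strong_induction_on with
  | _ m ih =>
  by_cases hinj : Function.Injective (G.vert ∘ f)
  · obtain ⟨c, hc⟩ := hX.isSimpleTransverseCycle hf hinj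
    exact ⟨m, _, hc, Set.range_comp_subset_range (· + c) f⟩
  · obtain ⟨n, hn, f', hf', hX', hsub⟩ := hX.exists_shorter hf hinj
    obtain ⟨n', f'', hsimple, hsub'⟩ := ih n hn hf' hX'
    exact ⟨n', f'', hsimple, hsub'.trans hsub⟩

theorem sminorOf_gamma_of_transverse_trails {m₁ m₂ : ℕ} {f : ZMod m₁ → G.D}
    {g : ZMod m₂ → G.D} {X : G.V} (hf : IsClosedTrail G m₁ f) (hg : IsClosedTrail G m₂ g)
    (hdisj : ∀ i j, f i ≠ g j ∧ f i ≠ G.edge (g j))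
    (hshare : ∀ v, (∃ i, G.vert (f i) = v) → (∃ j, G.vert (g j) = v) → v = X)
    (hXf : PassesOnceTransversally G m₁ f X) (hXg : PassesOnceTransversally G m₂ g X) :
    SMinorOf GammaGraph G := by
  obtain ⟨n₁, f', hf', hsub_f⟩ := hXf.exists_isSimpleTransverseCycle hf
  obtain ⟨n₂, g', hg', hsub_g⟩ := hXg.exists_isSimpleTransverseCycle hg
  refine sminorOf_gamma_of_isSimpleTransverseCycle hf' hg'
    ((disjoint_trailDarts hdisj).mono (trailDarts_mono hsub_f) (trailDarts_mono hsub_g)) ?_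
  rintro _ ⟨i, rfl⟩ ⟨j, hj⟩
  obtain ⟨k, hk⟩ := hsub_f ⟨i, rfl⟩
  obtain ⟨l, hl⟩ := hsub_g ⟨j, rfl⟩
  exact hshare _ ⟨k, by rw [hk]; rfl⟩ ⟨l, by rw [hl]; exact hj⟩

variable {G' : FramedGraph}

def HasSourceSink (G : FramedGraph) : Prop := ∃ S, G.IsSourceSink S

lemma IsSourceSink.preimage {S : Set G.D} (hS : G.IsSourceSink S) (ι : G'.D → G.D)
    (hinj : Function.Injective ι)
    (hvert : ∀ d d', G'.vert d = G'.vert d' ↔ G.vert (ι d) = G.vert (ι d'))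
    (hopp : ∀ d, ι (G'.opp d) = G.opp (ι d))
    (hsurj : ∀ d e, G.vert e = G.vert (ι d) → ∃ d', ι d' = e)
    (hedge : ∀ d, ι d ∈ S ↔ ι (G'.edge d) ∉ S) :
    G'.IsSourceSink (ι ⁻¹' S) := by
  refine ⟨hedge, fun v' => ?_⟩
  obtain ⟨d₀, rfl⟩ := exists_vert_eq v'
  obtain ⟨a, ha, haS, hoaS, huniq⟩ := hS.2 (G.vert (ι d₀))
  obtain ⟨d, rfl⟩ := hsurj d₀ a ha
  refine ⟨d, (hvert d d₀).2 ha, haS, by rwa [Set.mem_preimage, hopp], fun d' hd' hd'S => ?_⟩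
  rcases huniq (ι d') ((hvert d' d₀).1 hd') hd'S with h | h
  · exact .inl (hinj h)
  · exact .inr (hinj (h.trans (hopp d).symm))

lemma IsComponentRestriction.hasSourceSink (h : G.IsComponentRestriction G')
    (hG : G.HasSourceSink) : G'.HasSourceSink := by
  obtain ⟨S, hS⟩ := hG
  obtain ⟨ι, hinj, hedge, hopp, hvert, hclosed⟩ := h
  exact ⟨_, hS.preimage ι hinj hvert hopp (fun d e he => hclosed (ι d) e ⟨d, rfl⟩ (.inr he.symm))
    fun d => by rw [hedge]; exact hS.1 (ι d)⟩

lemma Iso.isComponentRestriction (h : G.Iso G') : G.IsComponentRestriction G' := by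
  obtain ⟨φ, ψ, hedge, hopp, hvert⟩ := h
  refine ⟨φ.symm, φ.symm.injective, fun d => ?_, fun d => ?_, fun d d' => ?_,
    fun _ y _ _ => ⟨φ y, φ.symm_apply_apply y⟩⟩
  · rw [φ.symm_apply_eq, ← hedge, φ.apply_symm_apply]
  · rw [φ.symm_apply_eq, ← hopp, φ.apply_symm_apply]
  · rw [← φ.apply_symm_apply d, ← φ.apply_symm_apply d', hvert, hvert, ψ.apply_eq_iff_eq,
      φ.symm_apply_apply, φ.symm_apply_apply]

-- `S` meets the darts at `X` in an opposite pair, and `p` matches no dart with itself or with its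
-- opposite.
lemma IsSourceSink.mem_iff_notMem_of_pairing {S : Set G.D} (hS : G.IsSourceSink S) {X : G.V}
    {p : G.D → G.D}
    (hp : ∀ e, G.vert e = X → G.vert (p e) = X ∧ p (p e) = e ∧ p e ≠ e ∧ p e ≠ G.opp e)
    {e : G.D} (he : G.vert e = X) : e ∈ S ↔ p e ∉ S := by
  obtain ⟨a, ha, haS, hoaS, huniq⟩ := hS.2 X
  obtain ⟨hpX, -, hpe, hpo⟩ := hp e he
  constructor
  · intro heS hpS
    rcases huniq e he heS with rfl | rfl <;> rcases huniq _ hpX hpS with h | h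
    · exact hpe h
    · exact hpo h
    · exact hpo (h.trans (G.opp_invol _).symm)
    · exact hpe h
  · intro hpS
    by_contra heS
    have hoe : G.vert (G.opp e) = X := (G.opp_vert e).trans he
    have hoaX : G.vert (G.opp a) = X := (G.opp_vert a).trans ha
    have hne : ∀ {x}, x ∈ S → x ≠ e := fun hx h => heS (h ▸ hx)
    have hnpe : ∀ {x}, x ∈ S → x ≠ p e := fun hx h => hpS (h ▸ hx)
    rcases eq_or_eq_or_eq_or_eq_of_vert_eq ha hoaX he hpX (G.opp_ne a).symm (hne haS)
      (hnpe haS) (hne hoaS) (hnpe hoaS) hpe.symm hoe with h | h | h | h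
    · exact heS (by rw [← G.opp_invol e, h]; exact hoaS)
    · exact heS (by rw [← G.opp_invol e, h, G.opp_invol]; exact haS)
    · exact G.opp_ne e h
    · exact hpo h.symm

lemma IsSmoothingAt.hasSourceSink {X : G.V} (h : G.IsSmoothingAt G' X)
    (hG : G.HasSourceSink) : G'.HasSourceSink := by
  obtain ⟨S, hS⟩ := hG
  obtain ⟨ι, p, hinj, hnX, hsurj, hvert, hopp, hp, hedge⟩ := h
  refine ⟨_, hS.preimage ι hinj hvert hopp
    (fun d e he => hsurj e (he ▸ hnX d)) fun d => ?_⟩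
  have hpar := fun {e} (he : G.vert e = X) => hS.mem_iff_notMem_of_pairing hp he
  rw [hedge, smoothEdge]
  have h₁ := hS.1 (ι d)
  split_ifs with hX₁ hX₂
  · exact h₁
  · have h₂ := hS.1 (p (G.edge (ι d)))
    have h₃ := hpar (not_not.1 hX₁)
    tauto
  · have h₂ := hS.1 (p (G.edge (ι d)))
    have h₃ := hpar (not_not.1 hX₁)
    have h₄ := hS.1 (p (G.edge (p (G.edge (ι d)))))
    have h₅ := hpar (not_not.1 hX₂)
    tauto

lemma HasSourceSink.of_minorOf (h : MinorOf G' G) (hG : G.HasSourceSink) :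
    G'.HasSourceSink := by
  obtain ⟨G'', hchain, hiso⟩ := h
  refine hiso.isComponentRestriction.hasSourceSink ?_
  clear hiso
  induction hchain with
  | refl => exact hG
  | tail _ hstep ih =>
    rcases hstep with ⟨X, hsmooth⟩ | hrestrict
    exacts [hsmooth.hasSourceSink ih, hrestrict.hasSourceSink ih]

end FramedGraph

instance : DecidableEq DeltaGraph.D := inferInstanceAs (DecidableEq (ZMod 12))
instance : Fintype DeltaGraph.D := inferInstanceAs (Fintype (ZMod 12))
instance : DecidableEq DeltaGraph.V := inferInstanceAs (DecidableEq (ZMod 3))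
instance : Fintype DeltaGraph.V := inferInstanceAs (Fintype (ZMod 3))

lemma gammaGraph_not_hasSourceSink : ¬ GammaGraph.HasSourceSink := by
  rintro ⟨S, hedge, hvert⟩
  obtain ⟨d, -, hd, hod, -⟩ := hvert ⟨0, Nat.one_pos⟩
  exact (hedge d).1 hd hod

-- Each edge `{2k, 2k + 1}` of `Δ` is oriented towards its odd end; the odd darts at a vertex are
-- `d` and `d + 6`, an opposite pair.
def deltaOddDarts : Set DeltaGraph.D := {d : ZMod 12 | d.val % 2 = 1}

instance : DecidablePred (· ∈ deltaOddDarts) := fun d =>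
  inferInstanceAs (Decidable (ZMod.val (n := 12) d % 2 = 1))

lemma deltaGraph_hasSourceSink : DeltaGraph.HasSourceSink :=
  ⟨deltaOddDarts, by unfold IsSourceSink; decide⟩

-- The darts at vertex `0` of `Δ` are `0, 5, 6, 11`, with opposite pairs `{0, 6}` and `{5, 11}`:
-- the first cycle leaves along `0` and returns along `6`, the second leaves along `5` and
-- returns along `11`.
def deltaCycle₁ : ZMod 2 → DeltaGraph.D := (![0, 7] : ZMod 2 → ZMod 12)

def deltaCycle₂ : ZMod 2 → DeltaGraph.D := (![5, 10] : ZMod 2 → ZMod 12)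

lemma sminorOf_gamma_delta : SMinorOf GammaGraph DeltaGraph :=
  sminorOf_gamma_of_transverse_trails (X := DeltaGraph.vert (deltaCycle₁ 0))
    (f := deltaCycle₁) (g := deltaCycle₂)
    ⟨two_pos, by decide, by decide⟩ ⟨two_pos, by decide, by decide⟩ (by decide) (by decide)
    ⟨⟨0, rfl, by decide⟩, by decide⟩ ⟨⟨0, by decide, by decide⟩, by decide⟩

/-- If a framed 4-graph contains two edge-disjoint cycles
sharing exactly one vertex, at which both cross transversally, then it
contains `Γ` as an s-minor; in particular `Γ` is an s-minor of `Δ` but not a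
minor of `Δ`. -/
theorem two_transverse_cycles_gamma_sminor :
    (∀ (G : FramedGraph) (m₁ m₂ : ℕ) (f : ZMod m₁ → G.D) (g : ZMod m₂ → G.D)
        (X : G.V),
      IsClosedTrail G m₁ f → IsClosedTrail G m₂ g →
      (∀ i j, f i ≠ g j ∧ f i ≠ G.edge (g j)) →
      (∀ v, (∃ i, G.vert (f i) = v) → (∃ j, G.vert (g j) = v) → v = X) →
      PassesOnceTransversally G m₁ f X → PassesOnceTransversally G m₂ g X →
      SMinorOf GammaGraph G) ∧
    SMinorOf GammaGraph DeltaGraph ∧ ¬ MinorOf GammaGraph DeltaGraph :=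
  ⟨fun _ _ _ _ _ _ => sminorOf_gamma_of_transverse_trails, sminorOf_gamma_delta,
    fun h => gammaGraph_not_hasSourceSink (deltaGraph_hasSourceSink.of_minorOf h)⟩
end
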